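/- Let P be a logic program over a finite linearly ordered set of atoms A, and order subsets of A lexicographically via their characteristic Boolean vectors (the least atom being most significant, false < true). Then P has an answer set if and only if P has an answer set M that is lexicographically least among the images { M^π : π a symmetry of P }. Consequently, adding the lex-leader symmetry-breaking constraint does not affect the existence of answer sets. -/
import Mathlib


/-- A (disjunctive) rule over a set of atoms `A`: a triple of finite sets of atoms
(head, positive body, negative body). -/
structure Rule (A : Type*) where
  head : Finset A
  pos : Finset A
  neg : Finset A
deriving DecidableEq

variable {A : Type*} [DecidableEq A]

/-- `M` is a model of a rule `(H, B⁺, ∅)` (the negative body is ignored; it is used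
only on rules of reducts, whose negative bodies are empty): if `B⁺ ⊆ M` then `H ∩ M ≠ ∅`. -/
def Rule.models (M : Finset A) (r : Rule A) : Prop :=
  r.pos ⊆ M → (r.head ∩ M).Nonempty

/-- The reduct `P^M` of a program `P` relative to `M`. -/
def reduct (P : Finset (Rule A)) (M : Finset A) : Finset (Rule A) :=
  (P.filter fun r => r.neg ∩ M = ∅).image fun r => ⟨r.head, r.pos, ∅⟩

/-- `M` is a ⊆-minimal model of the set of rules `Q`. -/
def IsMinModel (Q : Finset (Rule A)) (M : Finset A) : Prop :=
  (∀ r ∈ Q, Rule.models M r) ∧ ∀ N : Finset A, N ⊂ M → ¬ (∀ r ∈ Q, Rule.models N r)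

/-- `M` is an answer set of `P` if `M` is a ⊆-minimal model of the reduct `P^M`. -/
def IsAnswerSet (P : Finset (Rule A)) (M : Finset A) : Prop :=
  IsMinModel (reduct P M) M

/-- The image of a rule under a permutation of atoms. -/
def Rule.perm (π : Equiv.Perm A) (r : Rule A) : Rule A :=
  ⟨r.head.image π, r.pos.image π, r.neg.image π⟩

/-- The image of a program under a permutation of atoms. -/
def permProg (π : Equiv.Perm A) (P : Finset (Rule A)) : Finset (Rule A) :=
  P.image (Rule.perm π)

/-- A symmetry of a logic program `P` is a permutation of its atoms that does not
change `P`. -/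
def IsSymmetry (π : Equiv.Perm A) (P : Finset (Rule A)) : Prop :=
  permProg π P = P

/-- Lexicographic order on subsets of a linearly ordered set of atoms, via their
characteristic Boolean vectors: the least atom is most significant and
`false < true`, so `M ≤lex N` iff `M = N` or at the least atom where they differ,
`M` is `false` and `N` is `true`. -/
def finsetLexLe {A : Type*} [LinearOrder A] (M N : Finset A) : Prop :=
  M = N ∨ ∃ a : A, (∀ b : A, b < a → (b ∈ M ↔ b ∈ N)) ∧ a ∉ M ∧ a ∈ N

section Aux

open Finset

lemma finsetLexLe_refl {A : Type*} [LinearOrder A] (M : Finset A) : finsetLexLe M M :=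
  Or.inl rfl

lemma finsetLexLe_total {A : Type*} [LinearOrder A] [Fintype A] (M N : Finset A) :
    finsetLexLe M N ∨ finsetLexLe N M := by
  by_cases h : M = N
  · exact Or.inl (Or.inl h)
  · have hd : ((M \ N) ∪ (N \ M)).Nonempty := by
      rw [Finset.nonempty_iff_ne_empty]
      intro he
      apply h
      ext x
      constructor <;> intro hx <;> by_contra hx'
      · have : x ∈ (M \ N) ∪ (N \ M) := by simp [hx, hx']
        simp [he] at this
      · have : x ∈ (M \ N) ∪ (N \ M) := by simp [hx, hx']
        simp [he] at this
    set a := ((M \ N) ∪ (N \ M)).min' hd with ha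
    have hmem := ((M \ N) ∪ (N \ M)).min'_mem hd
    have hbelow : ∀ b : A, b < a → (b ∈ M ↔ b ∈ N) := by
      intro b hb
      by_contra hbne
      have : b ∈ (M \ N) ∪ (N \ M) := by
        simp only [Finset.mem_union, Finset.mem_sdiff]
        tauto
      exact absurd (Finset.min'_le _ _ this) (not_le.mpr hb)
    rw [← ha] at hmem
    simp only [Finset.mem_union, Finset.mem_sdiff] at hmem
    rcases hmem with ⟨haM, haN⟩ | ⟨haN, haM⟩
    · exact Or.inr (Or.inr ⟨a, fun b hb => (hbelow b hb).symm, haN, haM⟩)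
    · exact Or.inl (Or.inr ⟨a, hbelow, haM, haN⟩)

lemma finsetLexLe_trans {A : Type*} [LinearOrder A] {M N K : Finset A}
    (h1 : finsetLexLe M N) (h2 : finsetLexLe N K) : finsetLexLe M K := by
  rcases h1 with rfl | ⟨a, hab, haM, haN⟩
  · exact h2
  rcases h2 with rfl | ⟨a', hab', haN', haK'⟩
  · exact Or.inr ⟨a, hab, haM, haN⟩
  rcases lt_trichotomy a a' with h | h | h
  · refine Or.inr ⟨a, fun b hb => (hab b hb).trans (hab' b (hb.trans h)), haM, ?_⟩
    exact (hab' a h).mp haN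
  · subst h
    exact Or.inr ⟨a, fun b hb => (hab b hb).trans (hab' b hb), haM, haK'⟩
  · refine Or.inr ⟨a', fun b hb => (hab b (hb.trans h)).trans (hab' b hb), ?_, haK'⟩
    exact fun hc => haN' ((hab a' h).mp hc)

lemma exists_finsetLexLe_min {A : Type*} [LinearOrder A] [Fintype A]
    (S : Finset (Finset A)) (hS : S.Nonempty) :
    ∃ M ∈ S, ∀ N ∈ S, finsetLexLe M N := by
  classical
  induction S using Finset.induction_on with
  | empty => exact absurd hS (by simp)
  | @insert a S' ha ih =>
    by_cases hS' : S'.Nonempty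
    · obtain ⟨m, hm, hmin⟩ := ih hS'
      rcases finsetLexLe_total a m with h | h
      · refine ⟨a, Finset.mem_insert_self _ _, fun N hN => ?_⟩
        rcases Finset.mem_insert.mp hN with rfl | hN
        · exact finsetLexLe_refl _
        · exact finsetLexLe_trans h (hmin N hN)
      · refine ⟨m, Finset.mem_insert_of_mem hm, fun N hN => ?_⟩
        rcases Finset.mem_insert.mp hN with rfl | hN
        · exact h
        · exact hmin N hN
    · rw [Finset.not_nonempty_iff_eq_empty] at hS'
      subst hS'
      exact ⟨a, by simp, fun N hN => by
        simp only [Finset.mem_insert, Finset.notMem_empty, or_false] at hN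
        subst hN; exact finsetLexLe_refl _⟩

lemma Rule.perm_one (r : Rule A) : Rule.perm 1 r = r := by
  simp [Rule.perm]

lemma Rule.perm_mul (π σ : Equiv.Perm A) (r : Rule A) :
    Rule.perm (π * σ) r = Rule.perm π (Rule.perm σ r) := by
  simp only [Rule.perm, Finset.image_image, Equiv.Perm.coe_mul]

lemma isSymmetry_one (P : Finset (Rule A)) : IsSymmetry 1 P := by
  unfold IsSymmetry permProg
  rw [show Rule.perm (1 : Equiv.Perm A) = id from funext Rule.perm_one, Finset.image_id]

lemma permProg_mul (π σ : Equiv.Perm A) (P : Finset (Rule A)) :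
    permProg (π * σ) P = permProg π (permProg σ P) := by
  unfold permProg
  rw [Finset.image_image]
  apply Finset.image_congr
  intro r _
  exact Rule.perm_mul π σ r

lemma isSymmetry_mul {π σ : Equiv.Perm A} {P : Finset (Rule A)}
    (hπ : IsSymmetry π P) (hσ : IsSymmetry σ P) : IsSymmetry (π * σ) P := by
  unfold IsSymmetry at *
  rw [permProg_mul, hσ, hπ]

lemma models_perm (π : Equiv.Perm A) (M : Finset A) (r : Rule A) :
    Rule.models (M.image π) (Rule.perm π r) ↔ Rule.models M r := by
  unfold Rule.models Rule.perm
  simp only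
  rw [Finset.image_subset_image_iff π.injective,
    ← Finset.image_inter _ _ π.injective, Finset.image_nonempty]

lemma reduct_perm (π : Equiv.Perm A) (P : Finset (Rule A)) (M : Finset A) :
    reduct (permProg π P) (M.image π) = permProg π (reduct P M) := by
  unfold reduct permProg
  ext r'
  simp only [Finset.mem_image, Finset.mem_filter]
  constructor
  · rintro ⟨s, ⟨⟨r, hr, rfl⟩, hneg⟩, rfl⟩
    refine ⟨⟨r.head, r.pos, ∅⟩, ⟨r, ⟨hr, ?_⟩, rfl⟩, ?_⟩
    · rw [Rule.perm] at hneg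
      simp only at hneg
      rw [← Finset.image_inter _ _ π.injective, Finset.image_eq_empty] at hneg
      exact hneg
    · simp [Rule.perm]
  · rintro ⟨s, ⟨r, ⟨hr, hneg⟩, rfl⟩, rfl⟩
    refine ⟨Rule.perm π r, ⟨⟨r, hr, rfl⟩, ?_⟩, ?_⟩
    · rw [Rule.perm]
      simp only
      rw [← Finset.image_inter _ _ π.injective, Finset.image_eq_empty]
      exact hneg
    · simp [Rule.perm]

lemma isAnswerSet_perm {π : Equiv.Perm A} {P : Finset (Rule A)} {M : Finset A}
    (hπ : IsSymmetry π P) (hM : IsAnswerSet P M) : IsAnswerSet P (M.image π) := by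
  unfold IsAnswerSet IsMinModel at *
  have hred : reduct P (M.image π) = permProg π (reduct P M) := by
    conv_lhs => rw [← hπ]
    exact reduct_perm π P M
  rw [hred]
  obtain ⟨hmod, hmin⟩ := hM
  constructor
  · intro r' hr'
    obtain ⟨r, hr, rfl⟩ := Finset.mem_image.mp hr'
    exact (models_perm π M r).mpr (hmod r hr)
  · intro N hN hNmod
    apply hmin (N.image (π⁻¹ : Equiv.Perm A))
    · have h2 : (M.image π).image (π⁻¹ : Equiv.Perm A) = M := by
        rw [Finset.image_image]
        have : ((π⁻¹ : Equiv.Perm A) : A → A) ∘ (π : A → A) = id := by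
          funext x; simp
        rw [this, Finset.image_id]
      rw [← h2]
      exact (Finset.image_ssubset_image (Equiv.injective _)).mpr hN
    · intro r hr
      have hN' : N = (N.image (π⁻¹ : Equiv.Perm A)).image π := by
        rw [Finset.image_image]
        have : (π : A → A) ∘ ((π⁻¹ : Equiv.Perm A) : A → A) = id := by
          funext x; simp
        rw [this, Finset.image_id]
      have := hNmod (Rule.perm π r) (Finset.mem_image_of_mem _ hr)
      rw [hN'] at this
      exact (models_perm π _ r).mp this

end Aux

/-- **Lex-leader symmetry-breaking does not affect the existence of answer sets.**
A logic program `P` over a finite linearly ordered set of atoms has an answer set iff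
it has an answer set `M` that is lexicographically least among the images of `M`
under the symmetries of `P`. -/
theorem exists_answerSet_iff_exists_lexLeader_answerSet
    {A : Type*} [LinearOrder A] [Fintype A] (P : Finset (Rule A)) :
    (∃ M : Finset A, IsAnswerSet P M) ↔
      ∃ M : Finset A, IsAnswerSet P M ∧
        ∀ π : Equiv.Perm A, IsSymmetry π P → finsetLexLe M (M.image π) := by
  classical
  constructor
  · rintro ⟨M, hM⟩
    set S : Finset (Finset A) :=
      (Finset.univ.filter fun π : Equiv.Perm A => IsSymmetry π P).image
        (fun π : Equiv.Perm A => M.image (π : A → A)) with hS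
    have hSne : S.Nonempty := by
      refine ⟨M, ?_⟩
      rw [hS]
      apply Finset.mem_image.mpr
      refine ⟨1, Finset.mem_filter.mpr ⟨Finset.mem_univ _, isSymmetry_one P⟩, ?_⟩
      simp
    obtain ⟨M', hM'S, hM'min⟩ := exists_finsetLexLe_min S hSne
    obtain ⟨σ, hσ, rfl⟩ := Finset.mem_image.mp hM'S
    have hσsym : IsSymmetry σ P := (Finset.mem_filter.mp hσ).2
    refine ⟨M.image σ, isAnswerSet_perm hσsym hM, ?_⟩
    intro π hπ
    have hmem : (M.image σ).image π ∈ S := by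
      rw [hS]
      apply Finset.mem_image.mpr
      refine ⟨π * σ, Finset.mem_filter.mpr ⟨Finset.mem_univ _, isSymmetry_mul hπ hσsym⟩, ?_⟩
      rw [Finset.image_image]
      rfl
    exact hM'min _ hmem
  · rintro ⟨M, hM, _⟩
    exact ⟨M, hM⟩
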